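/- An invertible matrix g ∈ GL_{nr}(R) satisfies g·u = u·g if and only if g = φ(h) for some h ∈ GL_n(R[X]/(X^r)); that is, the image of the group embedding GL_n(R[X]/(X^r)) → GL_{nr}(R) induced by the injective ring homomorphism φ is exactly the centraliser of u in GL_{nr}(R). -/

import Mathlib

open Polynomial

/-- The truncated polynomial ring `R[X]/(X^r)`. -/
noncomputable abbrev TruncPoly (R : Type*) [CommRing R] (r : ℕ) : Type _ :=
  AdjoinRoot ((X : R[X]) ^ r)

/-- The element `∑_{t=0}^{r-1} A_t π^t` of `M_n(R[X]/(X^r))` determined by the family of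
coefficient matrices `A : Fin r → M_n(R)`, where `π` is the image of `X`. -/
noncomputable def toQuot (R : Type*) [CommRing R] (n r : ℕ)
    (A : Fin r → Matrix (Fin n) (Fin n) R) :
    Matrix (Fin n) (Fin n) (TruncPoly R r) :=
  ∑ t : Fin r,
    (AdjoinRoot.root ((X : R[X]) ^ r)) ^ (t : ℕ) •
      (A t).map (fun x => AdjoinRoot.of ((X : R[X]) ^ r) x)

/-- The block lower-triangular `(nr)×(nr)` matrix whose `(i,j)` block is `A_{i-j}` when
`i ≥ j` and zero otherwise. -/
def blockMat (R : Type*) [CommRing R] (n r : ℕ) (A : Fin r → Matrix (Fin n) (Fin n) R) :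
    Matrix (Fin r × Fin n) (Fin r × Fin n) R :=
  fun p q =>
    if ((q.1 : ℕ) ≤ (p.1 : ℕ)) then
      A ⟨(p.1 : ℕ) - (q.1 : ℕ), lt_of_le_of_lt (Nat.sub_le _ _) p.1.isLt⟩ p.2 q.2
    else 0

/-- The unipotent block matrix `u` with `(i,j)` block `I_n` when `i = j` or `i = j+1`, and
zero otherwise. -/
def uMat (R : Type*) [CommRing R] (n r : ℕ) : Matrix (Fin r × Fin n) (Fin r × Fin n) R :=
  fun p q => if p.2 = q.2 ∧ ((p.1 : ℕ) = (q.1 : ℕ) ∨ (p.1 : ℕ) = (q.1 : ℕ) + 1) then 1 else 0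

/-! Let `J` be the nilpotent shift matrix in `M_r(R)`. Sending `π ↦ J` gives an `R`-algebra map
`R[X]/(X^r) → M_r(R)`, injective because the first column of `∑ c_t J^t` is `c`; applying it
entrywise and flattening yields an injective ring homomorphism which agrees with `φ` on every
`toQuot A`, hence everywhere. Since `u = 1 + N` with `N` the image of the central matrix `π • 1`,
the image commutes with `u`. Conversely a matrix commuting with `u` commutes with `N`, so each of
its `r × r` submatrices with fixed `(a, b)` commutes with `J`; as the first basis vector is cyclic
for `J`, such a submatrix is determined by its first column and so equals the polynomial
`∑ c_t J^t` in `J`. Finally an invertible `g` in the centraliser lifts to a unit, because `g⁻¹`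
lies in the centraliser as well and the homomorphism is injective. -/

theorem Units.exists_map_eq_iff_of_injective {A B F : Type*} [Monoid A] [Monoid B]
    [FunLike F A B] [MonoidHomClass F A B] {f : F} (hf : Function.Injective f) (g : Bˣ) :
    (∃ h : Aˣ, f h = g) ↔ (g : B) ∈ Set.range f ∧ (↑g⁻¹ : B) ∈ Set.range f := by
  refine ⟨fun ⟨h, hh⟩ => ⟨⟨h, hh⟩, ⟨↑h⁻¹, ?_⟩⟩, fun ⟨⟨a, ha⟩, ⟨b, hb⟩⟩ => ?_⟩
  · exact Units.eq_inv_of_mul_eq_one_left (by rw [← hh, ← map_mul, Units.mul_inv, map_one])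
  · refine ⟨⟨a, b, hf ?_, hf ?_⟩, ha⟩ <;> simp [ha, hb]

theorem AdjoinRoot.exists_eq_sum_smul_root_pow {R : Type*} [CommRing R] {g : R[X]}
    (hg : g.Monic) {d : ℕ} (hd : g.natDegree ≤ d) (x : AdjoinRoot g) :
    ∃ c : Fin d → R, x = ∑ t : Fin d, c t • root g ^ (t : ℕ) := by
  nontriviality AdjoinRoot g
  obtain ⟨f, hf, rfl⟩ := (powerBasis' hg).exists_eq_aeval x
  refine ⟨fun t => f.coeff t, ?_⟩
  rw [powerBasis'_gen, aeval_eq_sum_range' (hf.trans_le hd), Fin.sum_univ_eq_sum_range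
    (fun t => f.coeff t • root g ^ t)]

section ShiftMatrix

variable (R : Type*) [CommRing R] (r : ℕ)

def shiftMatrix : Matrix (Fin r) (Fin r) R :=
  Matrix.of fun i j => if (i : ℕ) = j + 1 then 1 else 0

variable {R r}

theorem shiftMatrix_apply (i j : Fin r) :
    shiftMatrix R r i j = if (i : ℕ) = j + 1 then 1 else 0 :=
  rfl

theorem shiftMatrix_pow_apply (t : ℕ) (i j : Fin r) :
    (shiftMatrix R r ^ t) i j = if (i : ℕ) = j + t then 1 else 0 := by
  induction t generalizing i with
  | zero => simp [Matrix.one_apply, Fin.ext_iff]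
  | succ t ih =>
    rw [pow_succ', Matrix.mul_apply]
    simp only [ih, shiftMatrix_apply, ite_mul, one_mul, zero_mul]
    rw [Fin.sum_univ_eq_sum_range (fun k => if (i : ℕ) = k + 1 then
      (if k = (j : ℕ) + t then (1 : R) else 0) else 0), Finset.sum_eq_single ((j : ℕ) + t)]
    · simp [add_assoc]
    · intro k _ hk
      simp [hk]
    · intro h
      have := i.isLt
      simp only [Finset.mem_range, not_lt] at h
      rw [if_neg (show ¬(i : ℕ) = j + t + 1 by omega)]

theorem shiftMatrix_pow_self : shiftMatrix R r ^ r = 0 := by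
  ext i j
  rw [shiftMatrix_pow_apply, if_neg (by omega), Matrix.zero_apply]

theorem sum_smul_shiftMatrix_pow_apply (c : Fin r → R) (i j : Fin r) :
    (∑ t : Fin r, c t • shiftMatrix R r ^ (t : ℕ)) i j =
      if (j : ℕ) ≤ i then c ⟨i - j, lt_of_le_of_lt (Nat.sub_le _ _) i.isLt⟩ else 0 := by
  simp only [Matrix.sum_apply, Matrix.smul_apply, shiftMatrix_pow_apply, smul_eq_mul, mul_ite,
    mul_one, mul_zero]
  split_ifs with h
  · rw [Finset.sum_eq_single_of_mem ⟨i - j, lt_of_le_of_lt (Nat.sub_le _ _) i.isLt⟩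
      (Finset.mem_univ _)]
    · rw [if_pos (Nat.add_sub_cancel' h).symm]
    · intro t _ ht
      exact if_neg fun h' => ht (Fin.ext (show (t : ℕ) = i - j by omega))
  · exact Finset.sum_eq_zero fun t _ => if_neg (by omega)

theorem eq_zero_of_commute_shiftMatrix (hr : 0 < r) {Y : Matrix (Fin r) (Fin r) R}
    (hY : Commute Y (shiftMatrix R r)) (h0 : ∀ i, Y i ⟨0, hr⟩ = 0) : Y = 0 := by
  ext i k
  calc Y i k = (Y * shiftMatrix R r ^ (k : ℕ)) i ⟨0, hr⟩ := by
        simp [Matrix.mul_apply, shiftMatrix_pow_apply, Fin.val_inj]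
    _ = (shiftMatrix R r ^ (k : ℕ) * Y) i ⟨0, hr⟩ := by rw [(hY.pow_right k).eq]
    _ = 0 := by simp [Matrix.mul_apply, h0]

theorem eq_sum_smul_shiftMatrix_pow_of_commute (hr : 0 < r) {X : Matrix (Fin r) (Fin r) R}
    (hX : Commute X (shiftMatrix R r)) :
    X = ∑ t : Fin r, X t ⟨0, hr⟩ • shiftMatrix R r ^ (t : ℕ) := by
  rw [← sub_eq_zero]
  refine eq_zero_of_commute_shiftMatrix hr (hX.sub_left (Commute.sum_left _ _ _ fun t _ =>
    ((Commute.refl _).pow_left _).smul_left _)) fun i => ?_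
  simp [sum_smul_shiftMatrix_pow_apply]

end ShiftMatrix

section TruncEval

variable (R : Type*) [CommRing R] (r : ℕ)

noncomputable def truncEval : TruncPoly R r →ₐ[R] Matrix (Fin r) (Fin r) R :=
  Ideal.Quotient.liftₐ _ (aeval (shiftMatrix R r)) fun p hp => by
    obtain ⟨q, rfl⟩ := Ideal.mem_span_singleton'.1 hp
    rw [map_mul, map_pow, aeval_X, shiftMatrix_pow_self, mul_zero]

variable {R r}

theorem truncEval_root : truncEval R r (AdjoinRoot.root (X ^ r)) = shiftMatrix R r :=
  aeval_X _

theorem truncEval_sum_smul_root_pow (c : Fin r → R) :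
    truncEval R r (∑ t : Fin r, c t • AdjoinRoot.root (X ^ r) ^ (t : ℕ)) =
      ∑ t : Fin r, c t • shiftMatrix R r ^ (t : ℕ) := by
  simp only [map_sum, map_smul, map_pow, truncEval_root]

theorem truncEval_injective (hr : 0 < r) : Function.Injective (truncEval R r) := by
  refine (injective_iff_map_eq_zero _).2 fun x hx => ?_
  obtain ⟨c, rfl⟩ :=
    AdjoinRoot.exists_eq_sum_smul_root_pow (monic_X_pow r) (natDegree_X_pow_le r) x
  have hc : c = 0 := funext fun t => by
    simpa [sum_smul_shiftMatrix_pow_apply] using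
      congrFun₂ ((truncEval_sum_smul_root_pow c).symm.trans hx) t ⟨0, hr⟩
  simp [hc]

theorem mem_range_truncEval_of_commute (hr : 0 < r) {M : Matrix (Fin r) (Fin r) R}
    (hM : Commute M (shiftMatrix R r)) : M ∈ (truncEval R r).range :=
  ⟨_, (truncEval_sum_smul_root_pow _).trans (eq_sum_smul_shiftMatrix_pow_of_commute hr hM).symm⟩

end TruncEval

section BlockMatrix

variable (R : Type*) [CommRing R] (n r : ℕ)

def blockEquiv :
    Matrix (Fin n) (Fin n) (Matrix (Fin r) (Fin r) R) ≃+*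
      Matrix (Fin r × Fin n) (Fin r × Fin n) R :=
  (Matrix.compRingEquiv (Fin n) (Fin r) R).trans (Matrix.reindexRingEquiv R (Equiv.prodComm _ _))

noncomputable def toBlockMatrix :
    Matrix (Fin n) (Fin n) (TruncPoly R r) →+* Matrix (Fin r × Fin n) (Fin r × Fin n) R :=
  (blockEquiv R n r).toRingHom.comp (truncEval R r).toRingHom.mapMatrix

variable {R n r}

theorem blockEquiv_apply (M : Matrix (Fin n) (Fin n) (Matrix (Fin r) (Fin r) R))
    (p q : Fin r × Fin n) : blockEquiv R n r M p q = M p.2 q.2 p.1 q.1 :=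
  rfl

theorem toBlockMatrix_apply (M : Matrix (Fin n) (Fin n) (TruncPoly R r)) (p q : Fin r × Fin n) :
    toBlockMatrix R n r M p q = truncEval R r (M p.2 q.2) p.1 q.1 :=
  rfl

theorem toBlockMatrix_injective (hr : 0 < r) : Function.Injective (toBlockMatrix R n r) :=
  (blockEquiv R n r).injective.comp (Matrix.map_injective (truncEval_injective hr))

theorem toQuot_apply (A : Fin r → Matrix (Fin n) (Fin n) R) (a b : Fin n) :
    toQuot R n r A a b = ∑ t : Fin r, A t a b • AdjoinRoot.root (X ^ r) ^ (t : ℕ) := by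
  simp only [toQuot, Matrix.sum_apply, Matrix.smul_apply, Matrix.map_apply, smul_eq_mul]
  simp only [Algebra.smul_def, AdjoinRoot.algebraMap_eq, mul_comm]

theorem toQuot_surjective : Function.Surjective (toQuot R n r) := by
  intro M
  choose c hc using fun a b =>
    AdjoinRoot.exists_eq_sum_smul_root_pow (monic_X_pow r) (natDegree_X_pow_le r) (M a b)
  exact ⟨fun t => Matrix.of fun a b => c a b t, Matrix.ext fun a b => by
    rw [toQuot_apply, hc]; rfl⟩

theorem toBlockMatrix_toQuot (A : Fin r → Matrix (Fin n) (Fin n) R) :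
    toBlockMatrix R n r (toQuot R n r A) = blockMat R n r A := by
  ext p q
  rw [toBlockMatrix_apply, toQuot_apply, truncEval_sum_smul_root_pow,
    sum_smul_shiftMatrix_pow_apply]
  rfl

theorem toBlockMatrix_scalar_root :
    toBlockMatrix R n r (Matrix.scalar (Fin n) (AdjoinRoot.root (X ^ r))) =
      blockEquiv R n r (Matrix.scalar (Fin n) (shiftMatrix R r)) := by
  ext p q
  simp [toBlockMatrix_apply, blockEquiv_apply, Matrix.diagonal_apply, apply_ite, truncEval_root]

theorem uMat_eq_one_add :
    uMat R n r = 1 + blockEquiv R n r (Matrix.scalar (Fin n) (shiftMatrix R r)) := by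
  ext ⟨i, a⟩ ⟨j, b⟩
  by_cases hab : a = b
  · subst hab
    simp only [uMat, Matrix.add_apply, Matrix.one_apply, blockEquiv_apply, Matrix.scalar_apply,
      Matrix.diagonal_apply_eq, shiftMatrix_apply, Prod.mk.injEq, and_true, true_and, Fin.ext_iff]
    split_ifs <;> first | omega | simp
  · simp [uMat, blockEquiv_apply, hab]

theorem mem_range_toBlockMatrix_of_commute (hr : 0 < r)
    {M : Matrix (Fin r × Fin n) (Fin r × Fin n) R}
    (hM : Commute M (blockEquiv R n r (Matrix.scalar (Fin n) (shiftMatrix R r)))) :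
    M ∈ Set.range (toBlockMatrix R n r) := by
  have hG : Commute ((blockEquiv R n r).symm M) (Matrix.scalar (Fin n) (shiftMatrix R r)) := by
    simpa using hM.map (blockEquiv R n r).symm
  have hGab (a b : Fin n) : Commute ((blockEquiv R n r).symm M a b) (shiftMatrix R r) := by
    simpa [Commute, SemiconjBy, Matrix.scalar_apply] using congrFun₂ hG.eq a b
  choose N hN using fun a b => mem_range_truncEval_of_commute hr (hGab a b)
  exact ⟨Matrix.of N, ((blockEquiv R n r).symm_apply_eq.1 (Matrix.ext hN).symm).symm⟩

theorem commute_uMat_iff (hr : 0 < r) {M : Matrix (Fin r × Fin n) (Fin r × Fin n) R} :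
    Commute M (uMat R n r) ↔ M ∈ Set.range (toBlockMatrix R n r) := by
  have hN : Commute M (uMat R n r) ↔
      Commute M (blockEquiv R n r (Matrix.scalar (Fin n) (shiftMatrix R r))) := by
    simp only [uMat_eq_one_add, Commute, SemiconjBy, mul_add, add_mul, mul_one, one_mul,
      add_right_inj]
  rw [hN]
  refine ⟨mem_range_toBlockMatrix_of_commute hr, ?_⟩
  rintro ⟨N, rfl⟩
  rw [← toBlockMatrix_scalar_root]
  exact (Matrix.scalar_commute _ (Commute.all _) N).symm.map _

end BlockMatrix

theorem stmt2_general (R : Type*) [CommRing R] (n r : ℕ) (hr : 0 < r)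
    (φ : Matrix (Fin n) (Fin n) (TruncPoly R r) → Matrix (Fin r × Fin n) (Fin r × Fin n) R)
    (hφ : ∀ A : Fin r → Matrix (Fin n) (Fin n) R, φ (toQuot R n r A) = blockMat R n r A)
    (g : (Matrix (Fin r × Fin n) (Fin r × Fin n) R)ˣ) :
    (g : Matrix (Fin r × Fin n) (Fin r × Fin n) R) * uMat R n r =
        uMat R n r * (g : Matrix (Fin r × Fin n) (Fin r × Fin n) R) ↔
      ∃ h : (Matrix (Fin n) (Fin n) (TruncPoly R r))ˣ,
        φ (h : Matrix (Fin n) (Fin n) (TruncPoly R r)) =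
          (g : Matrix (Fin r × Fin n) (Fin r × Fin n) R) := by
  have hφ_eq : φ = toBlockMatrix R n r := funext fun M => by
    obtain ⟨A, rfl⟩ := toQuot_surjective M
    rw [hφ, toBlockMatrix_toQuot]
  subst hφ_eq
  change Commute _ _ ↔ _
  rw [Units.exists_map_eq_iff_of_injective (toBlockMatrix_injective hr)]
  refine ⟨fun hu => ⟨(commute_uMat_iff hr).1 hu, (commute_uMat_iff hr).1 hu.units_inv_left⟩,
    fun ⟨hg, _⟩ => (commute_uMat_iff hr).2 hg⟩

/-- An invertible matrix `g ∈ GL_{nr}(R)` commutes with `u` if and only if `g = φ(h)` for some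
`h ∈ GL_n(R[X]/(X^r))`: the image of the group embedding `GL_n(R[X]/(X^r)) → GL_{nr}(R)`
induced by the injective ring homomorphism `φ` is exactly the centraliser of `u` in
`GL_{nr}(R)`. -/
theorem stmt2 (R : Type*) [CommRing R] (n r : ℕ) (hn : 0 < n) (hr : 0 < r)
    (φ : Matrix (Fin n) (Fin n) (TruncPoly R r) → Matrix (Fin r × Fin n) (Fin r × Fin n) R)
    (hφ : ∀ A : Fin r → Matrix (Fin n) (Fin n) R, φ (toQuot R n r A) = blockMat R n r A)
    (g : (Matrix (Fin r × Fin n) (Fin r × Fin n) R)ˣ) :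
    (g : Matrix (Fin r × Fin n) (Fin r × Fin n) R) * uMat R n r =
        uMat R n r * (g : Matrix (Fin r × Fin n) (Fin r × Fin n) R) ↔
      ∃ h : (Matrix (Fin n) (Fin n) (TruncPoly R r))ˣ,
        φ (h : Matrix (Fin n) (Fin n) (TruncPoly R r)) =
          (g : Matrix (Fin r × Fin n) (Fin r × Fin n) R) :=
  stmt2_general R n r hr φ hφ g
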